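/- Let A be a finite abelian group with a nondegenerate symmetric ℚ/ℤ-valued pairing, and let H ⊆ A be a subgroup whose order is coprime to the order of H^⊥/H-part in the following sense: suppose |A| = |H|²·D with D coprime to |H|, and H is isotropic. Then A decomposes as A = H ⊕ H' ⊕ A' where A' is the D-torsion subgroup of A and H' is any isotropic complement of H inside the prime-to-D part; moreover H^⊥ = H ⊕ A'. -/

import Mathlib

/-! Since `|A| = d²D` with `d` and `D` coprime, `A` is the direct sum of its `d²`-torsion and its
`D`-torsion, and the `d²`-torsion has order dividing `d²`; as `H ⊕ H'` already has `d²` elements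
and is killed by `d²`, it is the whole `d²`-torsion. Elements of coprime orders pair trivially,
and isotropy for `q` forces `b` to vanish on `H` and on `H'`. So the `H'`-component of an element
of `H^⊥` pairs trivially with all of `A`, hence is zero by nondegeneracy. -/

/-- The homomorphism `ℚ/ℤ → ℚ/2ℤ` induced by multiplication by `2`. -/
noncomputable def doubleHom : AddCircle (1 : ℚ) →+ AddCircle (2 : ℚ) :=
  QuotientAddGroup.lift _
    ((QuotientAddGroup.mk' (AddSubgroup.zmultiples (2 : ℚ))).comp
      (zsmulAddGroupHom 2)) (by
    intro x hx
    obtain ⟨n, rfl⟩ := hx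
    simp only [AddMonoidHom.mem_ker, AddMonoidHom.comp_apply, QuotientAddGroup.mk'_apply,
      QuotientAddGroup.eq_zero_iff]
    exact ⟨n, by simp [zsmulAddGroupHom]; ring⟩)

/-- The orthogonal complement of a subgroup `H` w.r.t. a `ℚ/ℤ`-valued pairing `b`. -/
def orthCompl {A : Type*} [AddCommGroup A]
    (b : A →+ A →+ AddCircle (1 : ℚ)) (H : AddSubgroup A) : AddSubgroup A where
  carrier := {a | ∀ h ∈ H, b a h = 0}
  zero_mem' := by intro h hh; simp
  add_mem' := by intro x y hx hy h hh; simp [hx h hh, hy h hh]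
  neg_mem' := by intro x hx h hh; simp [hx h hh]

/-- The subgroup of elements of order dividing `D`. -/
def torsionSub (A : Type*) [AddCommGroup A] (D : ℕ) : AddSubgroup A :=
  (zsmulAddGroupHom (D : ℤ)).ker

open AddSubgroup

lemma doubleHom_injective : Function.Injective doubleHom := by
  rw [injective_iff_map_eq_zero]
  intro x hx
  obtain ⟨r, rfl⟩ := QuotientAddGroup.mk_surjective x
  rw [doubleHom, QuotientAddGroup.lift_mk', AddMonoidHom.comp_apply, QuotientAddGroup.mk'_apply,
    QuotientAddGroup.eq_zero_iff, zsmulAddGroupHom_apply] at hx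
  obtain ⟨n, hn⟩ := hx
  refine (QuotientAddGroup.eq_zero_iff r).mpr ⟨n, ?_⟩
  simp only [zsmul_eq_mul, Int.cast_ofNat, mul_one] at hn ⊢
  linarith

section Torsion

variable {A : Type*} [AddCommGroup A]

lemma mem_torsionSub {n : ℕ} {x : A} : x ∈ torsionSub A n ↔ n • x = 0 := by
  simp [torsionSub, natCast_zsmul]

lemma torsionSub_mono {m n : ℕ} (h : m ∣ n) : torsionSub A m ≤ torsionSub A n := by
  obtain ⟨k, rfl⟩ := h
  intro x hx
  rw [mem_torsionSub] at hx ⊢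
  rw [mul_comm, mul_nsmul', hx, nsmul_zero]

lemma le_torsionSub_of_addEquiv_zmod {K : AddSubgroup A} {n : ℕ} (e : K ≃+ ZMod n) :
    K ≤ torsionSub A n := by
  intro x hx
  have : n • (⟨x, hx⟩ : K) = 0 :=
    e.injective (by rw [map_nsmul, map_zero, nsmul_eq_mul, ZMod.natCast_self, zero_mul])
  exact mem_torsionSub.mpr (congrArg Subtype.val this)

lemma eq_zero_of_nsmul_of_coprime {m n : ℕ} (h : m.Coprime n) {x : A} (hm : m • x = 0)
    (hn : n • x = 0) : x = 0 :=
  AddMonoid.addOrderOf_eq_one_iff.mp <| Nat.eq_one_of_dvd_coprimes h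
    (addOrderOf_dvd_of_nsmul_eq_zero hm) (addOrderOf_dvd_of_nsmul_eq_zero hn)

lemma disjoint_torsionSub {m n : ℕ} (h : m.Coprime n) :
    Disjoint (torsionSub A m) (torsionSub A n) :=
  disjoint_def.mpr fun hm hn => eq_zero_of_nsmul_of_coprime h
    (mem_torsionSub.mp hm) (mem_torsionSub.mp hn)

variable {m n : ℕ}

lemma torsionSub_sup_torsionSub (hA : Nat.card A = m * n) (h : m.Coprime n) :
    torsionSub A m ⊔ torsionSub A n = ⊤ := by
  refine eq_top_iff.mpr fun a _ => ?_
  obtain ⟨u, v, huv⟩ := Nat.isCoprime_iff_coprime.mpr h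
  have hkill : ∀ w : ℤ, (w * (m * n : ℕ)) • a = 0 := fun w => by
    rw [mul_zsmul, natCast_zsmul, ← hA, card_nsmul_eq_zero', zsmul_zero]
  have ha : a = (v * n) • a + (u * m) • a := by
    rw [← add_zsmul, add_comm, huv, one_zsmul]
  rw [ha]
  refine add_mem_sup (mem_torsionSub.mpr ?_) (mem_torsionSub.mpr ?_)
  · rw [← natCast_zsmul, ← mul_zsmul, ← hkill v]
    congr 1
    push_cast
    ring
  · rw [← natCast_zsmul, ← mul_zsmul, ← hkill u]
    congr 1
    push_cast
    ring

variable [Finite A]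

lemma card_torsionSub_dvd (hA : Nat.card A = m * n) (h : m.Coprime n) :
    Nat.card (torsionSub A m) ∣ m := by
  have hcop : (Nat.card (torsionSub A m)).Coprime n := Nat.coprime_of_dvd fun p hp hpT hpn => by
    have := Fact.mk hp
    obtain ⟨x, hx⟩ := exists_prime_addOrderOf_dvd_card' p hpT
    have hpm : p ∣ m := hx ▸ addOrderOf_dvd_of_nsmul_eq_zero
      (Subtype.ext (mem_torsionSub.mp x.prop))
    exact hp.one_lt.ne' (Nat.eq_one_of_dvd_coprimes h hpm hpn)
  exact hcop.dvd_of_dvd_mul_right (hA ▸ card_addSubgroup_dvd_card _)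

lemma card_mul_card_le_card_sup {K K' : AddSubgroup A} (hKK' : Disjoint K K') :
    Nat.card K * Nat.card K' ≤ Nat.card ↥(K ⊔ K') := by
  rw [← Nat.card_prod]
  refine Nat.card_le_card_of_injective
    (fun p => ⟨p.1 + p.2, add_mem_sup p.1.prop p.2.prop⟩) fun p p' hp => ?_
  exact add_injective_of_disjoint hKK' (congrArg Subtype.val hp)

lemma sup_eq_torsionSub_of_disjoint (hA : Nat.card A = m * n) (h : m.Coprime n)
    {K K' : AddSubgroup A} (hK : K ≤ torsionSub A m) (hK' : K' ≤ torsionSub A m)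
    (hKK' : Disjoint K K') (hcard : Nat.card K * Nat.card K' = m) :
    K ⊔ K' = torsionSub A m := by
  have hm : 0 < m := Nat.pos_of_mul_pos_right (hA ▸ Nat.card_pos)
  refine eq_of_le_of_card_ge (sup_le hK hK') ?_
  calc Nat.card (torsionSub A m) ≤ m := Nat.le_of_dvd hm (card_torsionSub_dvd hA h)
    _ ≤ Nat.card ↥(K ⊔ K') := hcard ▸ card_mul_card_le_card_sup hKK'

end Torsion

lemma pairing_eq_zero_of_coprime {M N P : Type*} [AddCommGroup M] [AddCommGroup N]
    [AddCommGroup P] (b : M →+ N →+ P) {m n : ℕ} (h : m.Coprime n) {x : M} {y : N}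
    (hx : m • x = 0) (hy : n • y = 0) : b x y = 0 := by
  refine eq_zero_of_nsmul_of_coprime h ?_ ?_
  · rw [← AddMonoidHom.nsmul_apply, ← map_nsmul, hx, map_zero, AddMonoidHom.zero_apply]
  · rw [← map_nsmul, hy, map_zero]

section Pairing

variable {A : Type*} [AddCommGroup A] (b : A →+ A →+ AddCircle (1 : ℚ))

lemma le_orthCompl_of_coprime {m n : ℕ} (h : m.Coprime n) {K L : AddSubgroup A}
    (hK : K ≤ torsionSub A m) (hL : L ≤ torsionSub A n) : K ≤ orthCompl b L :=
  fun _ hx _ hy => pairing_eq_zero_of_coprime b h (mem_torsionSub.mp (hK hx))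
    (mem_torsionSub.mp (hL hy))

lemma le_orthCompl_self_of_isotropic (q : A → AddCircle (2 : ℚ))
    (hqb : ∀ x y : A, q (x + y) = q x + q y + doubleHom (b x y)) {K : AddSubgroup A}
    (hK : ∀ x ∈ K, q x = 0) : K ≤ orthCompl b K := fun x hx y hy => by
  have hxy := hqb x y
  rw [hK x hx, hK y hy, hK _ (add_mem hx hy), zero_add, zero_add, eq_comm,
    ← map_zero doubleHom] at hxy
  exact doubleHom_injective hxy

lemma orthCompl_eq_sup_of_sup_eq_top (hbnd : ∀ x : A, (∀ y : A, b x y = 0) → x = 0)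
    {K K' C : AddSubgroup A} (htop : K ⊔ K' ⊔ C = ⊤) (hK : K ≤ orthCompl b K)
    (hK' : K' ≤ orthCompl b K') (hCK : C ≤ orthCompl b K) (hK'C : K' ≤ orthCompl b C) :
    orthCompl b K = K ⊔ C := by
  have hdec : ∀ a : A, ∃ k ∈ K, ∃ k' ∈ K', ∃ c ∈ C, k + k' + c = a := fun a => by
    obtain ⟨w, hw, c, hc, rfl⟩ := mem_sup.mp (htop ▸ mem_top a)
    obtain ⟨k, hk, k', hk', rfl⟩ := mem_sup.mp hw
    exact ⟨k, hk, k', hk', c, hc, rfl⟩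
  refine le_antisymm (fun x hx => ?_) (sup_le hK hCK)
  obtain ⟨k, hk, k', hk', c, hc, rfl⟩ := hdec x
  suffices k' = 0 by simpa [this] using add_mem_sup hk hc
  refine hbnd k' fun y => ?_
  obtain ⟨l, hl, l', hl', c', hc', rfl⟩ := hdec y
  have hk'l : b k' l = 0 := by
    simpa [hK hk l hl, hCK hc l hl] using hx l hl
  simp [hk'l, hK' hk' l' hl', hK'C hk' c' hc']

end Pairing

theorem stmt11_general {A : Type*} [AddCommGroup A] [Fintype A]
    (b : A →+ A →+ AddCircle (1 : ℚ))
    (hbnd : ∀ x : A, (∀ y : A, b x y = 0) → x = 0)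
    (q : A → AddCircle (2 : ℚ))
    (hqb : ∀ x y : A, q (x + y) = q x + q y + doubleHom (b x y))
    (d D : ℕ)
    (hcard : Nat.card A = d ^ 2 * D) (hcop : Nat.Coprime d D)
    (H H' : AddSubgroup A)
    (hHcyc : Nonempty (H ≃+ ZMod d)) (hH'cyc : Nonempty (H' ≃+ ZMod d))
    (hHiso : ∀ x ∈ H, q x = 0) (hH'iso : ∀ x ∈ H', q x = 0)
    (hmeet : H ⊓ H' = ⊥) :
    H ⊔ H' ⊔ torsionSub A D = ⊤ ∧
    (H ⊔ H') ⊓ torsionSub A D = ⊥ ∧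
    orthCompl b H = H ⊔ torsionSub A D := by
  obtain ⟨e⟩ := hHcyc
  obtain ⟨e'⟩ := hH'cyc
  have hHd := le_torsionSub_of_addEquiv_zmod e
  have hH'd := le_torsionSub_of_addEquiv_zmod e'
  have hcop2 : (d ^ 2).Coprime D := hcop.pow_left 2
  have hd2 : torsionSub A d ≤ torsionSub A (d ^ 2) := torsionSub_mono (dvd_pow_self d two_ne_zero)
  have hsup : H ⊔ H' = torsionSub A (d ^ 2) :=
    sup_eq_torsionSub_of_disjoint hcard hcop2 (hHd.trans hd2) (hH'd.trans hd2)
      (disjoint_iff.mpr hmeet)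
      (by rw [Nat.card_congr e.toEquiv, Nat.card_congr e'.toEquiv, Nat.card_zmod, sq])
  have htop : H ⊔ H' ⊔ torsionSub A D = ⊤ := hsup ▸ torsionSub_sup_torsionSub hcard hcop2
  refine ⟨htop, hsup ▸ (disjoint_torsionSub hcop2).eq_bot, ?_⟩
  exact orthCompl_eq_sup_of_sup_eq_top b hbnd htop
    (le_orthCompl_self_of_isotropic b q hqb hHiso) (le_orthCompl_self_of_isotropic b q hqb hH'iso)
    (le_orthCompl_of_coprime b hcop.symm le_rfl hHd) (le_orthCompl_of_coprime b hcop hH'd le_rfl)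

/-- Let `A` be a finite abelian group with a nondegenerate symmetric
`ℚ/ℤ`-valued pairing `b` with quadratic refinement `q`, `|A| = d²·D` with `d` coprime
to `D`, `H ⊆ A` isotropic cyclic of order `d`, and `H'` an isotropic cyclic subgroup of
order `d` with `H ∩ H' = 0`. Then `A = H ⊕ H' ⊕ A'` where `A'` is the `D`-torsion
subgroup of `A`, and moreover `H^⊥ = H ⊕ A'`. -/
theorem stmt11 {A : Type*} [AddCommGroup A] [Fintype A]
    (b : A →+ A →+ AddCircle (1 : ℚ))
    (hbsymm : ∀ x y : A, b x y = b y x)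
    (hbnd : ∀ x : A, (∀ y : A, b x y = 0) → x = 0)
    (q : A → AddCircle (2 : ℚ))
    (hqb : ∀ x y : A, q (x + y) = q x + q y + doubleHom (b x y))
    (d D : ℕ) (hd : 0 < d) (hD : 0 < D)
    (hcard : Nat.card A = d ^ 2 * D) (hcop : Nat.Coprime d D)
    (H H' : AddSubgroup A)
    (hHcyc : Nonempty (H ≃+ ZMod d)) (hH'cyc : Nonempty (H' ≃+ ZMod d))
    (hHiso : ∀ x ∈ H, q x = 0) (hH'iso : ∀ x ∈ H', q x = 0)
    (hmeet : H ⊓ H' = ⊥) :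
    H ⊔ H' ⊔ torsionSub A D = ⊤ ∧
    (H ⊔ H') ⊓ torsionSub A D = ⊥ ∧
    orthCompl b H = H ⊔ torsionSub A D :=
  stmt11_general b hbnd q hqb d D hcard hcop H H' hHcyc hH'cyc hHiso hH'iso hmeet
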